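/- arXiv:1304.5822 — 3 statements merged into one kernel-verified Lean document; each statement's English description precedes it below -/
import Mathlib

section
/- Every path bargaining instance admits a fixed point: there exists a share vector x = (x_1,…,x_n) ∈ [0,1]^n (with the convention x_{n+1} = 0 and w_i = d_0·∏_{j=1}^{i} x_j) satisfying (1 − x_i)·w_{i−1} = (1 − x_{i+1})·(x_i·w_{i−1} − d_i) for every i = 1,…,n. -/
/-- `pathW d x i` is the value `w_i = d_0 · ∏_{j=1}^{i} x_j` reaching node `i`
in a path bargaining instance with values `d` and shares `x`. -/
noncomputable def pathW (d x : ℕ → ℝ) (i : ℕ) : ℝ :=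
  d 0 * ∏ j ∈ Finset.Icc 1 i, x j

/-- A share vector: `x_i ∈ [0,1]` for `i = 1,…,n`. -/
def IsShareVector (n : ℕ) (x : ℕ → ℝ) : Prop :=
  ∀ i, 1 ≤ i → i ≤ n → 0 ≤ x i ∧ x i ≤ 1

/-- A fixed point of the path bargaining equations
`(1 − x_i)·w_{i−1} = (1 − x_{i+1})·(x_i·w_{i−1} − d_i)` for `i = 1,…,n`,
with the convention `x_{n+1} = 0`. -/
def IsPathFixedPoint (n : ℕ) (d x : ℕ → ℝ) : Prop :=
  IsShareVector n x ∧
  ∀ i, 1 ≤ i → i ≤ n →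
    (1 - x i) * pathW d x (i - 1) =
      (1 - (if i = n then 0 else x (i + 1))) * (x i * pathW d x (i - 1) - d i)


/-! Writing `w_i = d_0 x_1 ⋯ x_i`, the equation at `i` reads
`w_{i-1} - w_i = (w_i - w_{i+1}) (w_i - d_i) / w_i`, a recurrence determining `w_{i-1}` from
`w_i` and `w_{i+1}`. Run it backwards from `w_{n+1} = 0`, `w_n = t`, with the factor
`(w_i - d_i) / w_i` clamped at `0`: the resulting `w_0` is continuous in `t > 0`, lies between
`t` and `(n + 1) t`, so some `t` gives `w_0 = d_0`. An active clamp would freeze the sequence at a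
value `≤ d_i < d_0`, so the clamp is never active, and `x_i = w_i / w_{i-1}` is a fixed point. -/

namespace PathBargaining

open Set

lemma pathW_succ (d x : ℕ → ℝ) (i : ℕ) : pathW d x (i + 1) = pathW d x i * x (i + 1) := by
  rw [pathW, pathW, Finset.prod_Icc_succ_top (by omega), mul_assoc]

/-- `(w_{i+1}, w_i) ↦ (w_i, w_{i-1})` for the clamped recurrence at a node with `d_i = c`. -/
noncomputable def step (c : ℝ) (p : ℝ × ℝ) : ℝ × ℝ :=
  (p.2, p.2 + (p.2 - p.1) * max 0 ((p.2 - c) / p.2))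

/-- With `c k = d_{n-k}`, `shoot c t k = (w_{n+1-k}, w_{n-k})`. -/
noncomputable def shoot (c : ℕ → ℝ) (t : ℝ) : ℕ → ℝ × ℝ
  | 0 => (0, t)
  | k + 1 => step (c k) (shoot c t k)

@[simp]
lemma fst_shoot_succ (c : ℕ → ℝ) (t : ℝ) (k : ℕ) : (shoot c t (k + 1)).1 = (shoot c t k).2 := rfl

lemma step_of_le {c : ℝ} {p : ℝ × ℝ} (hc : c ≤ p.2) (hp : 0 ≤ p.2) :
    step c p = (p.2, p.2 + (p.2 - p.1) * ((p.2 - c) / p.2)) := by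
  rw [step, max_eq_right (div_nonneg (sub_nonneg.2 hc) hp)]

lemma step_of_ge {c : ℝ} {p : ℝ × ℝ} (hc : p.2 ≤ c) (hp : 0 ≤ p.2) : step c p = (p.2, p.2) := by
  rw [step, max_eq_left (div_nonpos_of_nonpos_of_nonneg (sub_nonpos.2 hc) hp), mul_zero, add_zero]

lemma step_self (c b : ℝ) : step c (b, b) = (b, b) := by
  simp [step]

lemma step_bounds {c : ℝ} {p : ℝ × ℝ} (hc : 0 ≤ c) (hp : 0 < p.2) (hle : p.1 ≤ p.2) :
    p.2 ≤ (step c p).2 ∧ (step c p).2 - (step c p).1 ≤ p.2 - p.1 := by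
  have h0 : 0 ≤ max 0 ((p.2 - c) / p.2) := le_max_left _ _
  have h1 : max 0 ((p.2 - c) / p.2) ≤ 1 :=
    max_le zero_le_one ((div_le_one hp).2 (by linarith))
  simp only [step]
  constructor <;> nlinarith

lemma continuousOn_step (c : ℝ) : ContinuousOn (step c) {p | p.2 ≠ 0} := by
  have hsnd : ContinuousOn (fun p : ℝ × ℝ => p.2) {p | p.2 ≠ 0} := continuousOn_snd
  exact hsnd.prodMk (hsnd.add ((hsnd.sub continuousOn_fst).mul
    (continuousOn_const.sup ((hsnd.sub continuousOn_const).div hsnd fun _ hp => hp))))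

section Shooting

variable {c : ℕ → ℝ} {t : ℝ}

lemma shoot_bounds (hc : ∀ k, 0 ≤ c k) (ht : 0 < t) (k : ℕ) :
    t ≤ (shoot c t k).2 ∧ (shoot c t k).1 ≤ (shoot c t k).2 ∧
      (shoot c t k).2 - (shoot c t k).1 ≤ t := by
  induction k with
  | zero => simp [shoot, ht.le]
  | succ k ih =>
    obtain ⟨htk, hle, hgap⟩ := ih
    obtain ⟨hmono, hgap'⟩ := step_bounds (hc k) (ht.trans_le htk) hle
    exact ⟨htk.trans hmono, hmono, hgap'.trans hgap⟩

lemma snd_shoot_le (hc : ∀ k, 0 ≤ c k) (ht : 0 < t) (k : ℕ) :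
    (shoot c t k).2 ≤ (k + 1) * t := by
  induction k with
  | zero => simp [shoot]
  | succ k ih =>
    have hgap := (shoot_bounds hc ht (k + 1)).2.2
    have hfst := fst_shoot_succ c t k
    push_cast
    linarith

lemma continuousOn_shoot (hc : ∀ k, 0 ≤ c k) (k : ℕ) :
    ContinuousOn (fun t => shoot c t k) (Ioi 0) := by
  induction k with
  | zero => exact continuousOn_const.prodMk continuousOn_id
  | succ k ih =>
    exact (continuousOn_step (c k)).comp ih
      fun t ht => (lt_of_lt_of_le ht (shoot_bounds hc ht k).1).ne'

lemma shoot_eq_of_fst_eq_snd {m : ℕ} (h : (shoot c t m).1 = (shoot c t m).2) {j : ℕ}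
    (hj : m ≤ j) : shoot c t j = shoot c t m := by
  induction j, hj using Nat.le_induction with
  | base => rfl
  | succ j _ ih =>
    rw [shoot, ih, ← Prod.mk.eta (p := shoot c t m), h, step_self]

lemma exists_snd_shoot_eq (hc : ∀ k, 0 ≤ c k) {T : ℝ} (hT : 0 < T) (N : ℕ) :
    ∃ t, 0 < t ∧ (shoot c t N).2 = T := by
  set ε := T / (N + 2)
  have hε : 0 < ε := by positivity
  have hεT : ε ≤ T := div_le_self hT.le (by linarith [N.cast_nonneg (α := ℝ)])
  have hlow : (shoot c ε N).2 ≤ T := calc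
    (shoot c ε N).2 ≤ (N + 1) * ε := snd_shoot_le hc hε N
    _ ≤ T := by
      rw [← mul_div_assoc, div_le_iff₀ (by positivity)]
      nlinarith
  have hhigh : T ≤ (shoot c T N).2 := (shoot_bounds hc hT N).1
  have hcont : ContinuousOn (fun t => (shoot c t N).2) (Icc ε T) :=
    (continuous_snd.comp_continuousOn (continuousOn_shoot hc N)).mono
      fun t ht => hε.trans_le ht.1
  obtain ⟨t, ht, hTt⟩ := intermediate_value_Icc hεT hcont ⟨hlow, hhigh⟩
  exact ⟨t, hε.trans_le ht.1, hTt⟩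

lemma shoot_succ_of_lt (hc : ∀ k, 0 ≤ c k) (ht : 0 < t) {N : ℕ}
    (hcN : ∀ k < N, c k < (shoot c t N).2) {k : ℕ} (hk : k < N) :
    shoot c t (k + 1) = ((shoot c t k).2, (shoot c t k).2 +
      ((shoot c t k).2 - (shoot c t k).1) * (((shoot c t k).2 - c k) / (shoot c t k).2)) := by
  have hpos : 0 ≤ (shoot c t k).2 := ht.le.trans (shoot_bounds hc ht k).1
  rcases le_or_gt (c k) (shoot c t k).2 with hle | hlt
  · exact step_of_le hle hpos
  · have hfreeze : shoot c t (k + 1) = ((shoot c t k).2, (shoot c t k).2) := step_of_ge hlt.le hpos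
    have hlast := hcN k hk
    rw [shoot_eq_of_fst_eq_snd (by rw [hfreeze]) (Nat.succ_le_of_lt hk), hfreeze] at hlast
    exact absurd hlt.le (not_le.2 hlast)

end Shooting

lemma isPathFixedPoint_of_recurrence {n : ℕ} {d w : ℕ → ℝ} (hw0 : w 0 = d 0)
    (hwn : w (n + 1) = 0) (hpos : ∀ i ≤ n, 0 < w i) (hanti : ∀ i ≤ n, w (i + 1) ≤ w i)
    (hrec : ∀ k < n, w k - w (k + 1) =
      (w (k + 1) - w (k + 2)) * ((w (k + 1) - d (k + 1)) / w (k + 1))) :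
    IsPathFixedPoint n d (fun i => w i / w (i - 1)) := by
  set x : ℕ → ℝ := fun i => w i / w (i - 1)
  have hW : ∀ i ≤ n, pathW d x i = w i := by
    intro i hi
    induction i with
    | zero => simp [pathW, hw0]
    | succ i ih =>
      rw [pathW_succ, ih (by omega)]
      exact mul_div_cancel₀ _ (hpos i (by omega)).ne'
  refine ⟨fun i hi hin => ?_, fun i hi hin => ?_⟩ <;>
    obtain ⟨k, rfl⟩ : ∃ k, i = k + 1 := ⟨i - 1, by omega⟩
  · have hk := hpos k (by omega)
    exact ⟨div_nonneg (hpos _ hin).le hk.le, div_le_one_of_le₀ (hanti k (by omega)) hk.le⟩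
  · have hnext : (if k + 1 = n then 0 else x (k + 1 + 1)) = w (k + 2) / w (k + 1) := by
      split_ifs with h
      · rw [show k + 2 = n + 1 by omega, hwn, zero_div]
      · rfl
    have hk := (hpos k (by omega)).ne'
    have hk1 := (hpos (k + 1) hin).ne'
    rw [hnext]
    simp only [Nat.add_sub_cancel, hW k (by omega), x]
    rw [sub_mul, one_mul, div_mul_cancel₀ _ hk, hrec k (by omega)]
    field_simp

lemma exists_isPathFixedPoint_of_shoot {n : ℕ} {d : ℕ → ℝ} {t : ℝ} (hc : ∀ k, 0 ≤ d (n - k))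
    (ht : 0 < t) (hT : (shoot (fun k => d (n - k)) t n).2 = d 0)
    (hlt : ∀ i, 1 ≤ i → i ≤ n → d i < d 0) : ∃ x, IsPathFixedPoint n d x := by
  set c : ℕ → ℝ := fun k => d (n - k)
  set w : ℕ → ℝ := fun i => (shoot c t (n + 1 - i)).1
  refine ⟨_, isPathFixedPoint_of_recurrence (w := w) ?_ ?_ ?_ ?_ ?_⟩
  · simpa [w] using hT
  · simp [w, shoot]
  · intro i hi
    obtain ⟨m, rfl⟩ : ∃ m, n = i + m := ⟨n - i, by omega⟩
    simp only [w, show i + m + 1 - i = m + 1 by omega, fst_shoot_succ]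
    exact ht.trans_le (shoot_bounds hc ht m).1
  · intro i hi
    obtain ⟨m, rfl⟩ : ∃ m, n = i + m := ⟨n - i, by omega⟩
    simp only [w, show i + m + 1 - (i + 1) = m by omega, show i + m + 1 - i = m + 1 by omega,
      fst_shoot_succ]
    exact (shoot_bounds hc ht m).2.1
  · intro k hk
    obtain ⟨m, rfl⟩ : ∃ m, n = k + 1 + m := ⟨n - (k + 1), by omega⟩
    have hrec := shoot_succ_of_lt (c := c) hc ht (N := k + 1 + m)
      (fun j hj => hT ▸ hlt _ (by omega) (by omega)) (k := m) (by omega)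
    simp only [w, show k + 1 + m + 1 - k = m + 1 + 1 by omega,
      show k + 1 + m + 1 - (k + 1) = m + 1 by omega, show k + 1 + m + 1 - (k + 2) = m by omega,
      fst_shoot_succ, hrec, show c m = d (k + 1) by simp [c]]
    ring

end PathBargaining

theorem path_fixed_point_exists_general (n : ℕ) (d : ℕ → ℝ)
    (hd0 : 0 < d 0) (hd : ∀ i, 1 ≤ i → i ≤ n → 0 ≤ d i ∧ d i < d 0) :
    ∃ x : ℕ → ℝ, IsPathFixedPoint n d x := by
  have hc : ∀ k, 0 ≤ d (n - k) := fun k => by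
    rcases Nat.eq_zero_or_pos (n - k) with h | h
    · exact h ▸ hd0.le
    · exact (hd _ h (Nat.sub_le n k)).1
  obtain ⟨t, ht, hT⟩ := PathBargaining.exists_snd_shoot_eq hc hd0 n
  exact PathBargaining.exists_isPathFixedPoint_of_shoot hc ht hT fun i hi hin => (hd i hi hin).2

/-- Every path bargaining instance admits a fixed point. -/
theorem path_fixed_point_exists (n : ℕ) (hn : 1 ≤ n) (d : ℕ → ℝ)
    (hd0 : 0 < d 0) (hd : ∀ i, 1 ≤ i → i ≤ n → 0 ≤ d i ∧ d i < d 0) :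
    ∃ x : ℕ → ℝ, IsPathFixedPoint n d x :=
  path_fixed_point_exists_general n d hd0 hd
end

section
/- A path bargaining instance has at most one fixed point: if x and y are both share vectors in [0,1]^n satisfying all n bargaining equations, then x = y. -/
/-!
Write `w_i = pathW d x i`. Since `w_i = x_i w_{i-1}`, the bargaining equations become
`(w_{i-1} - w_i) w_i = (w_i - w_{i+1}) (w_i - d_i)` for `i < n` and `w_{n-1} - w_n = w_n - d_n`,
and `w` determines `x`. Along a fixed point `w` is positive and antitone, and `d_i ≤ w_i`
because no share equals `1` (a share `1` forces all earlier shares to be `1`, hence `d_i = d_0`).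
Given two fixed points with `w'_n ≤ w_n`, running the equations backwards from `i = n` shows
that the gap `w_i - w'_i` is nonnegative and nonincreasing in `i`; as it vanishes at `i = 0`,
it vanishes everywhere.
-/

lemma pathW_zero (d x : ℕ → ℝ) : pathW d x 0 = d 0 := by
  simp [pathW]

lemma pathW_succ (d x : ℕ → ℝ) (i : ℕ) : pathW d x (i + 1) = pathW d x i * x (i + 1) := by
  rw [pathW, pathW, Finset.prod_Icc_succ_top (Nat.le_add_left 1 i), mul_assoc]

def nextShare (n : ℕ) (x : ℕ → ℝ) (i : ℕ) : ℝ :=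
  if i = n then 0 else x (i + 1)

lemma nextShare_le_one {n i : ℕ} {x : ℕ → ℝ} (h : i ≠ n → x (i + 1) ≤ 1) :
    nextShare n x i ≤ 1 := by
  unfold nextShare
  split_ifs with hi
  · exact zero_le_one
  · exact h hi

lemma nextShare_lt_one {n i : ℕ} {x : ℕ → ℝ} (h : i ≠ n → x (i + 1) < 1) :
    nextShare n x i < 1 := by
  unfold nextShare
  split_ifs with hi
  · exact zero_lt_one
  · exact h hi

lemma sub_le_sub_of_bargaining {a₀ a₁ a₂ b₀ b₁ b₂ c : ℝ}
    (ha : (a₀ - a₁) * a₁ = (a₁ - a₂) * (a₁ - c)) (hb : (b₀ - b₁) * b₁ = (b₁ - b₂) * (b₁ - c))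
    (hb₁ : 0 < b₁) (hc : 0 ≤ c) (hca : c ≤ a₁) (hb₂ : b₂ ≤ b₁)
    (h₂ : 0 ≤ a₂ - b₂) (h₁₂ : a₂ - b₂ ≤ a₁ - b₁) :
    a₁ - b₁ ≤ a₀ - b₀ := by
  have key : a₁ * b₁ * ((a₀ - b₀) - (a₁ - b₁)) =
      ((a₁ - b₁) - (a₂ - b₂)) * (b₁ * (a₁ - c)) + (b₁ - b₂) * (c * (a₁ - b₁)) := by
    linear_combination b₁ * ha - a₁ * hb
  have hrhs : 0 ≤ ((a₁ - b₁) - (a₂ - b₂)) * (b₁ * (a₁ - c)) + (b₁ - b₂) * (c * (a₁ - b₁)) := by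
    have := mul_nonneg (sub_nonneg.2 h₁₂) (mul_nonneg hb₁.le (sub_nonneg.2 hca))
    have := mul_nonneg (sub_nonneg.2 hb₂) (mul_nonneg hc (h₂.trans h₁₂))
    linarith
  have hab : 0 < a₁ * b₁ := mul_pos (by linarith) hb₁
  rw [← key] at hrhs
  linarith [nonneg_of_mul_nonneg_right hrhs hab]

namespace IsPathFixedPoint

variable {n : ℕ} {d x : ℕ → ℝ}

lemma eq_succ (hx : IsPathFixedPoint n d x) {i : ℕ} (hi : i < n) :
    (1 - x (i + 1)) * pathW d x i =
      (1 - nextShare n x (i + 1)) * (pathW d x (i + 1) - d (i + 1)) := by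
  rw [pathW_succ, mul_comm (pathW d x i)]
  exact hx.2 (i + 1) (by omega) hi

lemma pathW_pos (hd0 : 0 < d 0) (hd : ∀ i, 1 ≤ i → i ≤ n → 0 ≤ d i)
    (hx : IsPathFixedPoint n d x) : ∀ i ≤ n, 0 < pathW d x i
  | 0, _ => by rwa [pathW_zero]
  | i + 1, hi => by
    have hw := pathW_pos hd0 hd hx i (by omega)
    have hxi : 0 < x (i + 1) := by
      by_contra! hle
      have hx0 : x (i + 1) = 0 := le_antisymm hle (hx.1 (i + 1) (by omega) hi).1
      have heq := hx.eq_succ hi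
      have ht : nextShare n x (i + 1) ≤ 1 :=
        nextShare_le_one fun _ => (hx.1 (i + 2) (by omega) (by omega)).2
      rw [pathW_succ, hx0] at heq
      nlinarith [hd (i + 1) (by omega) hi]
    rw [pathW_succ]
    exact mul_pos hw hxi

lemma pathW_eq_of_share_eq_one (hd0 : 0 < d 0) (hd : ∀ i, 1 ≤ i → i ≤ n → 0 ≤ d i)
    (hx : IsPathFixedPoint n d x) : ∀ i < n, x (i + 1) = 1 → pathW d x i = d 0
  | 0, _, _ => pathW_zero d x
  | i + 1, hi, h1 => by
    have heq := hx.eq_succ (i := i) (by omega)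
    rw [show nextShare n x (i + 1) = x (i + 2) from if_neg (by omega), h1, sub_self, zero_mul,
      mul_eq_zero, sub_eq_zero] at heq
    have hxi : x (i + 1) = 1 :=
      (heq.resolve_right (hx.pathW_pos hd0 hd i (by omega)).ne').symm
    rw [pathW_succ, hxi, mul_one]
    exact pathW_eq_of_share_eq_one hd0 hd hx i (by omega) hxi

lemma lt_one_of_nextShare_lt_one (hd0 : 0 < d 0)
    (hd : ∀ i, 1 ≤ i → i ≤ n → 0 ≤ d i ∧ d i < d 0) (hx : IsPathFixedPoint n d x)
    {i : ℕ} (h1 : 1 ≤ i) (hi : i ≤ n) (ht : nextShare n x i < 1) : x i < 1 := by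
  obtain ⟨j, rfl⟩ : ∃ j, i = j + 1 := ⟨i - 1, by omega⟩
  refine (hx.1 (j + 1) h1 hi).2.lt_of_ne fun h => ?_
  have hw := hx.pathW_eq_of_share_eq_one hd0 (fun k h1 h2 => (hd k h1 h2).1) j hi h
  have heq := hx.eq_succ hi
  rw [h, sub_self, zero_mul, eq_comm, mul_eq_zero, sub_eq_zero, sub_eq_zero, pathW_succ, h,
    mul_one, hw] at heq
  rcases heq with h | h
  · exact ht.ne' h
  · exact (hd (j + 1) h1 hi).2.ne h.symm

lemma lt_one (hd0 : 0 < d 0) (hd : ∀ i, 1 ≤ i → i ≤ n → 0 ≤ d i ∧ d i < d 0)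
    (hx : IsPathFixedPoint n d x) {i : ℕ} (h1 : 1 ≤ i) (hi : i ≤ n) : x i < 1 := by
  induction hi using Nat.decreasingInduction with
  | self => exact hx.lt_one_of_nextShare_lt_one hd0 hd h1 le_rfl (nextShare_lt_one (absurd rfl))
  | of_succ k hk ih =>
    exact hx.lt_one_of_nextShare_lt_one hd0 hd h1 hk.le (nextShare_lt_one fun _ => ih (by omega))

lemma le_pathW (hd0 : 0 < d 0) (hd : ∀ i, 1 ≤ i → i ≤ n → 0 ≤ d i ∧ d i < d 0)
    (hx : IsPathFixedPoint n d x) {i : ℕ} (hi : i < n) : d (i + 1) ≤ pathW d x (i + 1) := by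
  have ht : nextShare n x (i + 1) < 1 :=
    nextShare_lt_one fun _ => hx.lt_one hd0 hd (by omega) (by omega)
  have hw := hx.pathW_pos hd0 (fun k h1 h2 => (hd k h1 h2).1) i hi.le
  have hl : 0 ≤ (1 - x (i + 1)) * pathW d x i :=
    mul_nonneg (sub_nonneg.2 (hx.1 (i + 1) (by omega) hi).2) hw.le
  rw [hx.eq_succ hi] at hl
  exact sub_nonneg.1 (nonneg_of_mul_nonneg_right hl (sub_pos.2 ht))

lemma pathW_succ_le (hd0 : 0 < d 0) (hd : ∀ i, 1 ≤ i → i ≤ n → 0 ≤ d i)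
    (hx : IsPathFixedPoint n d x) {i : ℕ} (hi : i < n) : pathW d x (i + 1) ≤ pathW d x i := by
  rw [pathW_succ]
  exact mul_le_of_le_one_right (hx.pathW_pos hd0 hd i hi.le).le (hx.1 (i + 1) (by omega) hi).2

lemma pathW_recurrence (hx : IsPathFixedPoint n d x) {i : ℕ} (hi : i + 1 < n) :
    (pathW d x i - pathW d x (i + 1)) * pathW d x (i + 1) =
      (pathW d x (i + 1) - pathW d x (i + 2)) * (pathW d x (i + 1) - d (i + 1)) := by
  have heq := hx.eq_succ (i := i) (by omega)
  rw [show nextShare n x (i + 1) = x (i + 2) from if_neg (by omega)] at heq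
  linear_combination pathW d x (i + 1) * heq - pathW d x (i + 1) * pathW_succ d x i +
    (pathW d x (i + 1) - d (i + 1)) * pathW_succ d x (i + 1)

lemma pathW_recurrence_last {m : ℕ} (hx : IsPathFixedPoint (m + 1) d x) :
    pathW d x m - pathW d x (m + 1) = pathW d x (m + 1) - d (m + 1) := by
  have heq := hx.eq_succ (Nat.lt_succ_self m)
  rw [show nextShare (m + 1) x (m + 1) = 0 from if_pos rfl] at heq
  linear_combination heq - pathW_succ d x m

variable {y : ℕ → ℝ}

lemma pathW_sub_nonneg_and_antitone (hd0 : 0 < d 0)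
    (hd : ∀ i, 1 ≤ i → i ≤ n → 0 ≤ d i ∧ d i < d 0)
    (hx : IsPathFixedPoint n d x) (hy : IsPathFixedPoint n d y)
    (hle : pathW d y n ≤ pathW d x n) {i : ℕ} (hi : i < n) :
    0 ≤ pathW d x (i + 1) - pathW d y (i + 1) ∧
      pathW d x (i + 1) - pathW d y (i + 1) ≤ pathW d x i - pathW d y i := by
  obtain ⟨m, rfl⟩ : ∃ m, n = m + 1 := ⟨n - 1, by omega⟩
  induction Nat.le_of_lt_succ hi using Nat.decreasingInduction with
  | self =>
    have := hx.pathW_recurrence_last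
    have := hy.pathW_recurrence_last
    constructor <;> linarith
  | of_succ k hk ih =>
    obtain ⟨h₂, h₁₂⟩ := ih (by omega)
    have hd' : ∀ i, 1 ≤ i → i ≤ m + 1 → 0 ≤ d i := fun i h1 h2 => (hd i h1 h2).1
    exact ⟨h₂.trans h₁₂, sub_le_sub_of_bargaining (hx.pathW_recurrence (by omega))
      (hy.pathW_recurrence (by omega)) (hy.pathW_pos hd0 hd' _ (by omega))
      (hd' (k + 1) (by omega) (by omega)) (hx.le_pathW hd0 hd (by omega))
      (hy.pathW_succ_le hd0 hd' (by omega)) h₂ h₁₂⟩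

lemma pathW_eq_of_pathW_le (hd0 : 0 < d 0) (hd : ∀ i, 1 ≤ i → i ≤ n → 0 ≤ d i ∧ d i < d 0)
    (hx : IsPathFixedPoint n d x) (hy : IsPathFixedPoint n d y)
    (hle : pathW d y n ≤ pathW d x n) : ∀ i ≤ n, pathW d x i = pathW d y i
  | 0, _ => by rw [pathW_zero, pathW_zero]
  | i + 1, hi => by
    obtain ⟨h₀, h₁⟩ := hx.pathW_sub_nonneg_and_antitone hd0 hd hy hle hi
    have := hx.pathW_eq_of_pathW_le hd0 hd hy hle i (by omega)
    linarith

end IsPathFixedPoint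

theorem path_fixed_point_unique_general (n : ℕ) (d : ℕ → ℝ)
    (hd0 : 0 < d 0) (hd : ∀ i, 1 ≤ i → i ≤ n → 0 ≤ d i ∧ d i < d 0)
    (x y : ℕ → ℝ) (hx : IsPathFixedPoint n d x) (hy : IsPathFixedPoint n d y) :
    ∀ i, 1 ≤ i → i ≤ n → x i = y i := by
  have hW : ∀ i ≤ n, pathW d x i = pathW d y i := by
    rcases le_total (pathW d y n) (pathW d x n) with h | h
    · exact hx.pathW_eq_of_pathW_le hd0 hd hy h
    · exact fun i hi => (hy.pathW_eq_of_pathW_le hd0 hd hx h i hi).symm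
  intro i h1 hi
  obtain ⟨j, rfl⟩ : ∃ j, i = j + 1 := ⟨i - 1, by omega⟩
  have hpos := hy.pathW_pos hd0 (fun k h1 h2 => (hd k h1 h2).1) j (by omega)
  have hsucc := hW (j + 1) hi
  rw [pathW_succ, pathW_succ, hW j (by omega)] at hsucc
  exact mul_left_cancel₀ hpos.ne' hsucc

/-- A path bargaining instance has at most one fixed point. -/
theorem path_fixed_point_unique (n : ℕ) (hn : 1 ≤ n) (d : ℕ → ℝ)
    (hd0 : 0 < d 0) (hd : ∀ i, 1 ≤ i → i ≤ n → 0 ≤ d i ∧ d i < d 0)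
    (x y : ℕ → ℝ) (hx : IsPathFixedPoint n d x) (hy : IsPathFixedPoint n d y) :
    ∀ i, 1 ≤ i → i ≤ n → x i = y i :=
  path_fixed_point_unique_general n d hd0 hd x y hx hy
end

section
/- In any fixed point of the tree bargaining equations, every share is strictly positive: x_t > 0 for every non-root node t. -/
/-- A finite rooted tree, given by a parent function: the root is its own
parent, and every node reaches the root by iterating `parent`. -/
structure BTree where
  V : Type
  [instFintype : Fintype V]
  [instDecEq : DecidableEq V]
  root : V
  parent : V → V
  parent_root : parent root = root
  reaches_root : ∀ t : V, ∃ k : ℕ, parent^[k] t = root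

attribute [instance] BTree.instFintype BTree.instDecEq

/-- The children of a node `s`: the non-root nodes whose parent is `s`. -/
def BTree.children (T : BTree) (s : T.V) : Finset T.V :=
  Finset.univ.filter fun t => t ≠ T.root ∧ T.parent t = s

/-- A leaf is a node with no children. -/
def BTree.IsLeaf (T : BTree) (l : T.V) : Prop :=
  T.children l = ∅

/-- Maximum of `f` over a finite set `F`, with value `0` when `F` is empty. -/
noncomputable def fmax {α : Type*} (F : Finset α) (f : α → ℝ) : ℝ :=
  sSup (insert 0 (f '' (F : Set α)))

/-- `w` is the value function determined by leaf values `v` and shares `x`: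
`w l = v l` at each leaf `l`, and `w s = max_{t ∈ children s} x t · w t` at
each internal node `s`. -/
def IsValueFn (T : BTree) (v x w : T.V → ℝ) : Prop :=
  (∀ l, T.IsLeaf l → w l = v l) ∧
  ∀ s, ¬ T.IsLeaf s → w s = fmax (T.children s) fun t => x t * w t

/-- `wexcl T x w s t`: the maximum value reaching `s` from its children other
than `t` (`0` when `t` is the only child). -/
noncomputable def wexcl (T : BTree) (x w : T.V → ℝ) (s t : T.V) : ℝ :=
  fmax ((T.children s).erase t) fun t' => x t' * w t'

/-- A fixed point of the tree bargaining equations: `x` is a share vector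
(`x root = 0`, `x t ∈ [0,1]` off the root), `w` is the induced value function,
and for every non-root `t` with parent `s`:
`(1 − x t)·w t = (1 − x s)·(max(w_{s∖t}, x t · w t) − w_{s∖t})`. -/
def IsTreeFixedPoint (T : BTree) (v x w : T.V → ℝ) : Prop :=
  IsValueFn T v x w ∧
  x T.root = 0 ∧
  (∀ t, t ≠ T.root → 0 ≤ x t ∧ x t ≤ 1) ∧
  ∀ t, t ≠ T.root →
    (1 - x t) * w t =
      (1 - x (T.parent t)) *
        (max (wexcl T x w (T.parent t) t) (x t * w t) - wexcl T x w (T.parent t) t)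

/-!
All values `w` are positive: a node of maximal depth among those with value zero cannot be a leaf, and at
a fixed point a zero value at a node forces a zero value at each of its children, since the
fixed-point equation of a child `t` then reads `(1 - x t)·w t = 0` while `x t·w t ≤ w (parent t) = 0`.
Finally, a zero share `x t = 0` turns the equation of `t` into `w t = 0`, because `max(e, 0) = e`
for the nonnegative `e = w_{s∖t}`.
-/

section Fmax

variable {α : Type*}

lemma fmax_bddAbove (F : Finset α) (f : α → ℝ) : BddAbove (insert 0 (f '' (F : Set α))) :=
  ((F.finite_toSet.image f).insert 0).bddAbove

lemma fmax_nonneg (F : Finset α) (f : α → ℝ) : 0 ≤ fmax F f :=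
  le_csSup (fmax_bddAbove F f) (Set.mem_insert _ _)

lemma le_fmax {F : Finset α} (f : α → ℝ) {a : α} (ha : a ∈ F) : f a ≤ fmax F f :=
  le_csSup (fmax_bddAbove F f) (Set.mem_insert_of_mem _ ⟨a, ha, rfl⟩)

lemma fmax_mono {F G : Finset α} (hFG : F ⊆ G) (f : α → ℝ) : fmax F f ≤ fmax G f := by
  apply csSup_le (Set.insert_nonempty _ _)
  rintro y (rfl | ⟨a, ha, rfl⟩)
  · exact fmax_nonneg G f
  · exact le_fmax f (hFG ha)

end Fmax

namespace BTree

variable (T : BTree)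

lemma mem_children {s c : T.V} : c ∈ T.children s ↔ c ≠ T.root ∧ T.parent c = s := by
  simp [children]

lemma not_isLeaf_parent {c : T.V} (hc : c ≠ T.root) : ¬ T.IsLeaf (T.parent c) := fun hleaf =>
  Finset.notMem_empty c (hleaf ▸ T.mem_children.mpr ⟨hc, rfl⟩)

noncomputable def depth (t : T.V) : ℕ := Nat.find (T.reaches_root t)

lemma depth_parent {c : T.V} (hc : c ≠ T.root) : T.depth c = T.depth (T.parent c) + 1 :=
  Nat.find_comp_succ _ (T.reaches_root (T.parent c)) hc

end BTree

section FixedPoint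

variable {T : BTree} {v x w : T.V → ℝ}

lemma IsValueFn.nonneg (hw : IsValueFn T v x w) (hv : ∀ l, T.IsLeaf l → 0 ≤ v l) (t : T.V) :
    0 ≤ w t := by
  by_cases hl : T.IsLeaf t
  · exact hw.1 t hl ▸ hv t hl
  · exact hw.2 t hl ▸ fmax_nonneg _ _

lemma IsValueFn.mul_le_parent (hw : IsValueFn T v x w) {t : T.V} (ht : t ≠ T.root) :
    x t * w t ≤ w (T.parent t) :=
  hw.2 _ (T.not_isLeaf_parent ht) ▸ le_fmax (fun u => x u * w u) (T.mem_children.mpr ⟨ht, rfl⟩)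

lemma IsValueFn.wexcl_le_parent (hw : IsValueFn T v x w) {t : T.V} (ht : t ≠ T.root) :
    wexcl T x w (T.parent t) t ≤ w (T.parent t) :=
  hw.2 _ (T.not_isLeaf_parent ht) ▸ fmax_mono (Finset.erase_subset _ _) _

lemma IsTreeFixedPoint.value_eq_zero_of_parent (hfp : IsTreeFixedPoint T v x w)
    (hv : ∀ l, T.IsLeaf l → 0 ≤ v l) {t : T.V} (ht : t ≠ T.root) (hzero : w (T.parent t) = 0) :
    w t = 0 := by
  obtain ⟨hw, -, hx, heq⟩ := hfp
  have hshare : x t * w t = 0 :=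
    le_antisymm (hzero ▸ hw.mul_le_parent ht) (mul_nonneg (hx t ht).1 (hw.nonneg hv t))
  have hexcl : wexcl T x w (T.parent t) t = 0 :=
    le_antisymm (hzero ▸ hw.wexcl_le_parent ht) (fmax_nonneg _ _)
  have hrest := heq t ht
  rw [hexcl, hshare, max_self, sub_zero, mul_zero] at hrest
  linear_combination hrest + hshare

lemma IsTreeFixedPoint.value_pos (hfp : IsTreeFixedPoint T v x w)
    (hv : ∀ l, T.IsLeaf l → 0 < v l) (t : T.V) : 0 < w t := by
  have hv' : ∀ l, T.IsLeaf l → 0 ≤ v l := fun l hl => (hv l hl).le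
  by_contra! hle
  obtain ⟨s, hs, hdeepest⟩ := Finset.exists_max_image (Finset.univ.filter (w · = 0)) T.depth
    ⟨t, Finset.mem_filter.mpr ⟨Finset.mem_univ t, le_antisymm hle (hfp.1.nonneg hv' t)⟩⟩
  have hs0 : w s = 0 := (Finset.mem_filter.mp hs).2
  have hinternal : ¬ T.IsLeaf s := fun hl => (hv s hl).ne' (hfp.1.1 s hl ▸ hs0)
  obtain ⟨c, hc⟩ := Finset.nonempty_iff_ne_empty.mpr hinternal
  obtain ⟨hcr, rfl⟩ := T.mem_children.mp hc
  have hc0 := hfp.value_eq_zero_of_parent hv' hcr hs0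
  have := hdeepest c (Finset.mem_filter.mpr ⟨Finset.mem_univ c, hc0⟩)
  rw [T.depth_parent hcr] at this
  omega

end FixedPoint

theorem tree_shares_pos_general (T : BTree) (v x w : T.V → ℝ)
    (hv : ∀ l, T.IsLeaf l → 0 < v l)
    (hfp : IsTreeFixedPoint T v x w) :
    ∀ t, t ≠ T.root → 0 < x t := by
  intro t ht
  have hpos := hfp.value_pos hv t
  obtain ⟨-, -, hx, heq⟩ := hfp
  refine (hx t ht).1.lt_of_ne fun hzero => hpos.ne' ?_
  have hexcl : 0 ≤ wexcl T x w (T.parent t) t := fmax_nonneg _ _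
  have hrest := heq t ht
  rwa [← hzero, zero_mul, max_eq_left hexcl, sub_self, mul_zero, sub_zero, one_mul] at hrest

/-- In any fixed point of the tree bargaining equations, every share is
strictly positive. -/
theorem tree_shares_pos (T : BTree) (v x w : T.V → ℝ)
    (hv : ∀ l, T.IsLeaf l → 0 < v l) (hroot : ¬ T.IsLeaf T.root)
    (hfp : IsTreeFixedPoint T v x w) :
    ∀ t, t ≠ T.root → 0 < x t :=
  tree_shares_pos_general T v x w hv hfp
end
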